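/- arXiv:2510.27322 — 4 statements merged into one kernel-verified Lean document; each statement's English description precedes it below -/
import Mathlib

section
/- Let μ = μ₁ ∗ μ₂ be the convolution of two compactly supported Borel probability measures on ℝⁿ, neither a Dirac measure. If Λ is an orthogonal set of exponentials for μ₁, then Λ is an orthogonal set for μ, but Λ cannot be a spectrum of μ (i.e., the exponentials indexed by Λ cannot form an orthonormal basis of L²(μ)). -/
/-!
Orthogonality passes from `μ₁` to `μ` because `μ̂ = μ̂₁ μ̂₂`. If `Λ` were a spectrum of `μ`, then
for every `ξ`, Parseval for `μ` and Bessel for `μ₁` give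
`1 = ∑_λ |μ̂₁(ξ - λ)|² |μ̂₂(ξ - λ)|² ≤ ∑_λ |μ̂₁(ξ - λ)|² ≤ 1`, which forces `|μ̂₂(ξ - λ)| = 1` for
some `λ ∈ Λ`. So countably many translates of the closed subgroup `H = {|μ̂₂| = 1}` cover `ℝⁿ`:
`H` has positive Lebesgue measure, hence is open by Steinhaus' theorem, hence is all of `ℝⁿ` by
connectedness. But `|μ̂₂(η)| = 1` means that `x ↦ e^{2πi⟨x,η⟩}` is `μ₂`-a.e. constant (equality in
`|∫ e^{2πi⟨x,η⟩} dμ₂| ≤ 1`); for a countable dense set of `η` these characters separate points, so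
`μ₂` is a Dirac measure.
-/

open MeasureTheory

/-- The Fourier transform of a measure on `ℝⁿ`. -/
noncomputable def measureFT {n : ℕ} (μ : Measure (EuclideanSpace ℝ (Fin n)))
    (ξ : EuclideanSpace ℝ (Fin n)) : ℂ :=
  ∫ x, Complex.exp (2 * (Real.pi : ℂ) * Complex.I * ((inner ℝ x ξ : ℝ) : ℂ)) ∂μ

/-- `Λ` is an orthogonal set of exponentials for `μ`. -/
def IsOrthogonalSet {n : ℕ} (μ : Measure (EuclideanSpace ℝ (Fin n)))
    (Λ : Set (EuclideanSpace ℝ (Fin n))) : Prop :=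
  ∀ l1 ∈ Λ, ∀ l2 ∈ Λ, l1 ≠ l2 → measureFT μ (l1 - l2) = 0

/-- `Λ` is a spectrum of `μ`: the exponentials `e^{2πi⟨λ,·⟩}`, `λ ∈ Λ`, are mutually
orthogonal in `L²(μ)` (each has norm one since `μ` is a probability measure) and they are
total: any `f ∈ L²(μ)` orthogonal to all of them vanishes `μ`-a.e. This is exactly the
statement that they form an orthonormal basis of `L²(μ)`. -/
def IsSpectrum {n : ℕ} (μ : Measure (EuclideanSpace ℝ (Fin n)))
    (Λ : Set (EuclideanSpace ℝ (Fin n))) : Prop :=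
  IsOrthogonalSet μ Λ ∧
    ∀ f : EuclideanSpace ℝ (Fin n) → ℂ, MemLp f 2 μ →
      (∀ l ∈ Λ, (∫ x, f x * (starRingEnd ℂ)
          (Complex.exp (2 * (Real.pi : ℂ) * Complex.I * ((inner ℝ x l : ℝ) : ℂ))) ∂μ) = 0) →
      f =ᵐ[μ] 0


open Complex Set Filter Topology
open scoped Real InnerProductSpace FourierTransform ComplexConjugate ENNReal

theorem HilbertBasis.hasSum_norm_inner_sq {ι 𝕜 E : Type*} [RCLike 𝕜] [NormedAddCommGroup E]
    [InnerProductSpace 𝕜 E] (b : HilbertBasis ι 𝕜 E) (x : E) :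
    HasSum (fun i => ‖⟪b i, x⟫_𝕜‖ ^ 2) (‖x‖ ^ 2) := by
  simpa [b.repr_apply_apply, b.repr.norm_map] using lp.hasSum_norm (p := 2) (by simp) (b.repr x)

theorem AddSubgroup.eq_top_of_countable_cover {G : Type*} [AddCommGroup G] [TopologicalSpace G]
    [IsTopologicalAddGroup G] [LocallyCompactSpace G] [ConnectedSpace G] [MeasurableSpace G]
    [BorelSpace G] (μ : Measure G) [μ.IsAddHaarMeasure] [μ.InnerRegular] (H : AddSubgroup G)
    (hH : MeasurableSet (H : Set G)) {Λ : Set G} (hΛ : Λ.Countable)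
    (hcover : ∀ ξ, ∃ l ∈ Λ, ξ - l ∈ H) : H = ⊤ := by
  have hcover' : univ ⊆ ⋃ l ∈ Λ, (· + -l) ⁻¹' (H : Set G) := fun ξ _ => by
    simpa [← sub_eq_add_neg] using hcover ξ
  have hpos : 0 < μ H := by
    refine pos_iff_ne_zero.2 fun h0 => NeZero.ne μ (Measure.measure_univ_eq_zero.1 ?_)
    refine measure_mono_null hcover' ((measure_biUnion_null_iff hΛ).2 fun l _ => ?_)
    rwa [measure_preimage_add_right]
  have hnhds : (H : Set G) ∈ 𝓝 0 := by
    refine mem_of_superset (Measure.sub_mem_nhds_zero_of_addHaar_pos μ H hH hpos) ?_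
    rintro _ ⟨a, ha, b, hb, rfl⟩
    exact H.sub_mem ha hb
  have hopen := H.isOpen_of_mem_nhds hnhds
  exact SetLike.coe_injective <|
    (IsClopen.eq_univ ⟨H.isClosed_of_isOpen hopen, hopen⟩ ⟨0, H.zero_mem⟩)

theorem exists_eq_one_of_hasSum_mul {ι : Type*} {p q : ι → ℝ} (hp₀ : ∀ i, 0 ≤ p i)
    (hp : Summable p) (hp₁ : ∑' i, p i ≤ 1) (hq : ∀ i, q i ≤ 1)
    (hpq : HasSum (fun i => p i * q i) 1) : ∃ i, q i = 1 := by
  by_contra! hne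
  obtain ⟨i, hi⟩ : ∃ i, p i * q i ≠ 0 := by
    by_contra! h0
    exact one_ne_zero (hpq.unique (by simpa only [h0] using hasSum_zero))
  have hlt : p i * q i < p i :=
    mul_lt_of_lt_one_right (lt_of_le_of_ne (hp₀ i) (left_ne_zero_of_mul hi).symm)
      (lt_of_le_of_ne (hq i) (hne i))
  have := hpq.summable.tsum_lt_tsum (fun j => mul_le_of_le_one_right (hp₀ j) (hq j)) hlt hp
  linarith [hpq.tsum_eq]

local notation "𝔼" n:max => EuclideanSpace ℝ (Fin n)

section FourierExp

variable {n : ℕ}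

noncomputable def fourierExp (ξ x : 𝔼 n) : ℂ :=
  Complex.exp (2 * (π : ℂ) * I * ((⟪x, ξ⟫_ℝ : ℝ) : ℂ))

lemma fourierExp_eq_fourierChar (ξ x : 𝔼 n) : fourierExp ξ x = 𝐞 ⟪x, ξ⟫_ℝ := by
  rw [fourierExp, Real.fourierChar_apply]
  push_cast
  ring_nf

@[simp]
lemma norm_fourierExp (ξ x : 𝔼 n) : ‖fourierExp ξ x‖ = 1 := by
  rw [fourierExp_eq_fourierChar, Circle.norm_coe]

lemma fourierExp_add_left (a b x : 𝔼 n) :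
    fourierExp (a + b) x = fourierExp a x * fourierExp b x := by
  simp only [fourierExp_eq_fourierChar, inner_add_right, AddChar.map_add_eq_mul, Circle.coe_mul]

lemma fourierExp_add_right (ξ x y : 𝔼 n) :
    fourierExp ξ (x + y) = fourierExp ξ x * fourierExp ξ y := by
  simp only [fourierExp_eq_fourierChar, inner_add_left, AddChar.map_add_eq_mul, Circle.coe_mul]

lemma fourierExp_neg (ξ x : 𝔼 n) : fourierExp (-ξ) x = conj (fourierExp ξ x) := by
  simp only [fourierExp_eq_fourierChar, inner_neg_right, AddChar.map_neg_eq_inv,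
    Circle.coe_inv_eq_conj]

lemma fourierExp_zero (x : 𝔼 n) : fourierExp 0 x = 1 := by
  simp [fourierExp]

lemma continuous_fourierExp (ξ : 𝔼 n) : Continuous (fourierExp ξ) := by
  unfold fourierExp; fun_prop

lemma continuous_fourierExp_left (x : 𝔼 n) : Continuous fun ξ : 𝔼 n => fourierExp ξ x := by
  unfold fourierExp; fun_prop

lemma measureFT_eq_integral (ν : Measure (𝔼 n)) (ξ : 𝔼 n) :
    measureFT ν ξ = ∫ x, fourierExp ξ x ∂ν := rfl

lemma measureFT_map_add_prod (μ₁ μ₂ : Measure (𝔼 n)) [IsFiniteMeasure μ₁] [IsFiniteMeasure μ₂]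
    (ξ : 𝔼 n) :
    measureFT (Measure.map (fun p : 𝔼 n × 𝔼 n => p.1 + p.2) (μ₁.prod μ₂)) ξ
      = measureFT μ₁ ξ * measureFT μ₂ ξ := by
  rw [measureFT_eq_integral,
    integral_map (by fun_prop) (continuous_fourierExp ξ).aestronglyMeasurable]
  simp only [fourierExp_add_right, integral_prod_mul, measureFT_eq_integral]

lemma eq_zero_of_forall_fourierExp_eq_one {v : 𝔼 n} (h : ∀ ξ, fourierExp ξ v = 1) : v = 0 := by
  by_contra hv₀
  have hv : ‖v‖ ^ 2 ≠ 0 := by simpa using hv₀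
  refine Real.fourierChar_ne_one (AddChar.ext _ _ fun t => Circle.ext ?_)
  have hξ : ⟪v, (t / ‖v‖ ^ 2) • v⟫_ℝ = t := by
    rw [real_inner_smul_right, real_inner_self_eq_norm_sq, div_mul_cancel₀ _ hv]
  have := h ((t / ‖v‖ ^ 2) • v)
  rw [fourierExp_eq_fourierChar, hξ] at this
  simpa using this

lemma eq_of_forall_fourierExp_eq {x y : 𝔼 n} (h : ∀ ξ, fourierExp ξ x = fourierExp ξ y) :
    x = y :=
  sub_eq_zero.1 <| eq_zero_of_forall_fourierExp_eq_one fun ξ =>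
    mul_right_cancel₀ (b := fourierExp ξ y) (fun h0 => by simpa [h0] using norm_fourierExp ξ y)
      (by rw [← fourierExp_add_right, sub_add_cancel, h, one_mul])

variable (ν : Measure (𝔼 n))

lemma measureFT_neg (ξ : 𝔼 n) : measureFT ν (-ξ) = conj (measureFT ν ξ) := by
  simp only [measureFT_eq_integral, fourierExp_neg, integral_conj]

section Finite

variable [IsFiniteMeasure ν]

lemma memLp_fourierExp (ξ : 𝔼 n) (p : ℝ≥0∞) : MemLp (fourierExp ξ) p ν :=
  MemLp.of_bound (continuous_fourierExp ξ).aestronglyMeasurable 1 (.of_forall fun x => by simp)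

lemma continuous_measureFT : Continuous (measureFT ν) :=
  continuous_of_dominated (bound := fun _ => 1)
    (fun ξ => (continuous_fourierExp ξ).aestronglyMeasurable)
    (fun ξ => .of_forall fun x => (norm_fourierExp ξ x).le) (integrable_const 1)
    (.of_forall continuous_fourierExp_left)

end Finite

variable [IsProbabilityMeasure ν]

@[simp]
lemma measureFT_zero : measureFT ν 0 = 1 := by
  simp [measureFT_eq_integral, fourierExp_zero]

lemma norm_measureFT_le_one (ξ : 𝔼 n) : ‖measureFT ν ξ‖ ≤ 1 :=
  (norm_integral_le_of_norm_le_const (.of_forall fun x => (norm_fourierExp ξ x).le)).trans_eq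
    (by simp)

end FourierExp

section L2

variable {n : ℕ} (ν : Measure (𝔼 n)) [IsProbabilityMeasure ν]

noncomputable def fourierExpLp (ξ : 𝔼 n) : Lp ℂ 2 ν := (memLp_fourierExp ν ξ 2).toLp

lemma fourierExpLp_ae_eq (ξ : 𝔼 n) : fourierExpLp ν ξ =ᵐ[ν] fourierExp ξ :=
  (memLp_fourierExp ν ξ 2).coeFn_toLp

lemma inner_fourierExpLp (a b : 𝔼 n) :
    ⟪fourierExpLp ν a, fourierExpLp ν b⟫_ℂ = measureFT ν (b - a) := by
  rw [L2.inner_def, measureFT_eq_integral]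
  refine integral_congr_ae ?_
  filter_upwards [fourierExpLp_ae_eq ν a, fourierExpLp_ae_eq ν b] with x ha hb
  rw [RCLike.inner_apply', ha, hb, ← fourierExp_neg, ← fourierExp_add_left, neg_add_eq_sub]

@[simp]
lemma norm_fourierExpLp (ξ : 𝔼 n) : ‖fourierExpLp ν ξ‖ = 1 := by
  rw [@norm_eq_sqrt_re_inner ℂ, inner_fourierExpLp, sub_self, measureFT_zero]
  simp

variable {ν} {Λ : Set (𝔼 n)}

lemma orthonormal_fourierExpLp (h : IsOrthogonalSet ν Λ) :
    Orthonormal ℂ fun l : Λ => fourierExpLp ν l := by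
  classical
  refine orthonormal_iff_ite.2 fun i j => ?_
  rw [inner_fourierExpLp]
  split_ifs with hij
  · rw [hij, sub_self, measureFT_zero]
  · exact h _ j.2 _ i.2 fun hji => hij (Subtype.ext hji.symm)

lemma orthogonal_span_fourierExpLp_eq_bot (h : IsSpectrum ν Λ) :
    (Submodule.span ℂ (range fun l : Λ => fourierExpLp ν l))ᗮ = ⊥ := by
  refine (Submodule.eq_bot_iff _).2 fun f hf => Lp.ext ?_
  refine (h.2 f (Lp.memLp f) fun l hl => ?_).trans (Lp.coeFn_zero ℂ 2 ν).symm
  have hfl := (Submodule.mem_orthogonal' _ f).1 hf _ (Submodule.subset_span ⟨⟨l, hl⟩, rfl⟩)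
  rw [inner_eq_zero_symm, L2.inner_def] at hfl
  rw [← hfl]
  refine integral_congr_ae ?_
  filter_upwards [fourierExpLp_ae_eq ν l] with x hx
  rw [RCLike.inner_apply', hx, mul_comm]
  rfl

lemma summable_norm_measureFT_sq (h : IsOrthogonalSet ν Λ) (ξ : 𝔼 n) :
    Summable fun l : Λ => ‖measureFT ν (ξ - l)‖ ^ 2 := by
  simpa only [inner_fourierExpLp] using
    (orthonormal_fourierExpLp h).inner_products_summable (fourierExpLp ν ξ)

lemma tsum_norm_measureFT_sq_le_one (h : IsOrthogonalSet ν Λ) (ξ : 𝔼 n) :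
    ∑' l : Λ, ‖measureFT ν (ξ - l)‖ ^ 2 ≤ 1 := by
  simpa only [inner_fourierExpLp, norm_fourierExpLp, one_pow] using
    (orthonormal_fourierExpLp h).tsum_inner_products_le (fourierExpLp ν ξ)

lemma hasSum_norm_measureFT_sq (h : IsSpectrum ν Λ) (ξ : 𝔼 n) :
    HasSum (fun l : Λ => ‖measureFT ν (ξ - l)‖ ^ 2) 1 := by
  let b := HilbertBasis.mkOfOrthogonalEqBot (orthonormal_fourierExpLp h.1)
    (orthogonal_span_fourierExpLp_eq_bot h)
  simpa only [b, HilbertBasis.coe_mkOfOrthogonalEqBot, inner_fourierExpLp, norm_fourierExpLp,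
    one_pow] using b.hasSum_norm_inner_sq (fourierExpLp ν ξ)

end L2

section Unimodular

variable {n : ℕ} (ν : Measure (𝔼 n)) [IsProbabilityMeasure ν]

lemma fourierExp_ae_eq_of_norm_measureFT_eq_one {η : 𝔼 n} (h : ‖measureFT ν η‖ = 1) :
    fourierExp η =ᵐ[ν] fun _ => measureFT ν η := by
  refine (ae_eq_const_or_norm_integral_lt_of_norm_le_const (C := 1)
    (.of_forall fun x => (norm_fourierExp η x).le)).resolve_right ?_ |>.trans ?_
  · simp [← measureFT_eq_integral, h]
  · rw [average_eq_integral]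
    rfl

lemma measureFT_add_of_norm_eq_one {a b : 𝔼 n} (ha : ‖measureFT ν a‖ = 1)
    (hb : ‖measureFT ν b‖ = 1) : measureFT ν (a + b) = measureFT ν a * measureFT ν b := by
  rw [measureFT_eq_integral (ξ := a + b),
    integral_congr_ae (g := fun _ => measureFT ν a * measureFT ν b)]
  · simp
  filter_upwards [fourierExp_ae_eq_of_norm_measureFT_eq_one ν ha,
    fourierExp_ae_eq_of_norm_measureFT_eq_one ν hb] with x hxa hxb
  rw [fourierExp_add_left, hxa, hxb]

def unimodularSubgroup : AddSubgroup (𝔼 n) where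
  carrier := {η | ‖measureFT ν η‖ = 1}
  zero_mem' := by simp
  add_mem' {a b} (ha : ‖_‖ = 1) (hb : ‖_‖ = 1) := show ‖_‖ = 1 by
    rw [measureFT_add_of_norm_eq_one ν ha hb, norm_mul, ha, hb, one_mul]
  neg_mem' := by simp [measureFT_neg]

lemma isClosed_unimodularSubgroup : IsClosed (unimodularSubgroup ν : Set (𝔼 n)) :=
  isClosed_eq (continuous_measureFT ν).norm continuous_const

lemma exists_eq_dirac_of_unimodularSubgroup_eq_top (h : unimodularSubgroup ν = ⊤) :
    ∃ x₀, ν = Measure.dirac x₀ := by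
  obtain ⟨D, hDc, hDd⟩ := TopologicalSpace.exists_countable_dense (𝔼 n)
  have hD : ∀ᵐ x ∂ν, ∀ η ∈ D, fourierExp η x = measureFT ν η :=
    (ae_ball_iff hDc).2 fun η _ =>
      fourierExp_ae_eq_of_norm_measureFT_eq_one ν <| (AddSubgroup.eq_top_iff' _).1 h η
  obtain ⟨x₀, hx₀⟩ := hD.exists
  have hconst : ∀ᵐ x ∂ν, x = x₀ := hD.mono fun x hx =>
    eq_of_forall_fourierExp_eq <| congrFun <|
      Continuous.ext_on hDd (continuous_fourierExp_left x) (continuous_fourierExp_left x₀)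
        fun η hη => (hx η hη).trans (hx₀ η hη).symm
  refine ⟨x₀, ?_⟩
  calc ν = ν.map id := Measure.map_id.symm
    _ = ν.map fun _ => x₀ := Measure.map_congr hconst
    _ = Measure.dirac x₀ := by simp [Measure.map_const]

end Unimodular

lemma exists_sub_mem_unimodularSubgroup_of_isSpectrum_conv {n : ℕ} (μ₁ μ₂ : Measure (𝔼 n))
    [IsProbabilityMeasure μ₁] [IsProbabilityMeasure μ₂] {Λ : Set (𝔼 n)}
    (horth : IsOrthogonalSet μ₁ Λ)
    (hspec : IsSpectrum (Measure.map (fun p : 𝔼 n × 𝔼 n => p.1 + p.2) (μ₁.prod μ₂)) Λ)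
    (ξ : 𝔼 n) : ∃ l ∈ Λ, ξ - l ∈ unimodularSubgroup μ₂ := by
  have : IsProbabilityMeasure (Measure.map (fun p : 𝔼 n × 𝔼 n => p.1 + p.2) (μ₁.prod μ₂)) :=
    Measure.isProbabilityMeasure_map (by fun_prop)
  have hparseval := hasSum_norm_measureFT_sq hspec ξ
  simp only [measureFT_map_add_prod, norm_mul, mul_pow] at hparseval
  obtain ⟨l, hl⟩ := exists_eq_one_of_hasSum_mul (fun _ => sq_nonneg _)
    (summable_norm_measureFT_sq horth ξ) (tsum_norm_measureFT_sq_le_one horth ξ)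
    (fun _ => pow_le_one₀ (norm_nonneg _) (norm_measureFT_le_one μ₂ _)) hparseval
  exact ⟨l, l.2, (pow_eq_one_iff_of_nonneg (norm_nonneg _) two_ne_zero).1 hl⟩

theorem orthSet_of_conv_not_spectrum_general {n : ℕ}
    (μ₁ μ₂ μ : Measure (EuclideanSpace ℝ (Fin n)))
    [IsProbabilityMeasure μ₁] [IsProbabilityMeasure μ₂]
    (hdirac₂ : ∀ x, μ₂ ≠ Measure.dirac x)
    (hconv : μ = Measure.map (fun p : EuclideanSpace ℝ (Fin n) × EuclideanSpace ℝ (Fin n) =>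
      p.1 + p.2) (μ₁.prod μ₂))
    (Λ : Set (EuclideanSpace ℝ (Fin n))) (hΛ : Λ.Countable)
    (horth : IsOrthogonalSet μ₁ Λ) :
    IsOrthogonalSet μ Λ ∧ ¬ IsSpectrum μ Λ := by
  subst hconv
  refine ⟨fun l₁ h₁ l₂ h₂ hne => ?_, fun hspec => ?_⟩
  · rw [measureFT_map_add_prod, horth l₁ h₁ l₂ h₂ hne, zero_mul]
  · have htop := (unimodularSubgroup μ₂).eq_top_of_countable_cover volume
      (isClosed_unimodularSubgroup μ₂).measurableSet hΛ
      (exists_sub_mem_unimodularSubgroup_of_isSpectrum_conv μ₁ μ₂ horth hspec)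
    obtain ⟨x₀, hx₀⟩ := exists_eq_dirac_of_unimodularSubgroup_eq_top μ₂ htop
    exact hdirac₂ x₀ hx₀

/-- if `μ = μ₁ ∗ μ₂` is the convolution of two compactly supported Borel
probability measures, neither a Dirac measure, and `Λ` is an orthogonal set for `μ₁`,
then `Λ` is an orthogonal set for `μ` but not a spectrum of `μ`. -/
theorem orthSet_of_conv_not_spectrum {n : ℕ}
    (μ₁ μ₂ μ : Measure (EuclideanSpace ℝ (Fin n)))
    [IsProbabilityMeasure μ₁] [IsProbabilityMeasure μ₂]
    (K₁ K₂ : Set (EuclideanSpace ℝ (Fin n))) (hK₁ : IsCompact K₁) (hK₂ : IsCompact K₂)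
    (hsupp₁ : μ₁ K₁ᶜ = 0) (hsupp₂ : μ₂ K₂ᶜ = 0)
    (hdirac₁ : ∀ x, μ₁ ≠ Measure.dirac x) (hdirac₂ : ∀ x, μ₂ ≠ Measure.dirac x)
    (hconv : μ = Measure.map (fun p : EuclideanSpace ℝ (Fin n) × EuclideanSpace ℝ (Fin n) =>
      p.1 + p.2) (μ₁.prod μ₂))
    (Λ : Set (EuclideanSpace ℝ (Fin n))) (hΛ : Λ.Countable)
    (horth : IsOrthogonalSet μ₁ Λ) :
    IsOrthogonalSet μ Λ ∧ ¬ IsSpectrum μ Λ :=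
  orthSet_of_conv_not_spectrum_general μ₁ μ₂ μ hdirac₂ hconv Λ hΛ horth
end

section
/- Fix m, N ∈ ℕ⁺ and ρ ∈ (0,1), and let ν be the self-similar measure satisfying ν = (1/(2Nm)) ∑_{d=0}^{2Nm-1} ν ∘ τ_d^{-1}, where τ_d(x) = (-1)^{⌊d/m⌋} ρ (x + d). Then the Fourier transform ν̂ satisfies ν̂(-t) = e^{2πi m ρ t} ν̂(t) for all t ∈ ℝ. -/
/-!
Put `R x = -x - mρ`. Writing `d' = d ± m` for the index in the neighbouring block of length `m`
(so that `τ_d` and `τ_d'` carry opposite signs), one checks `R ∘ τ_d = τ_d'`, and `d ↦ d'` is an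
involution of `{0, …, 2Nm - 1}`. Hence `R` only permutes the terms of the self-similarity equation,
so `R_* ν = ν`, and taking Fourier transforms of both sides gives the reflection formula.
-/

open MeasureTheory
open scoped ENNReal

def partner (m d : ℕ) : ℕ := if Even (d / m) then d + m else d - m

section partner

variable {m d : ℕ}

lemma le_of_not_even_div (h : ¬Even (d / m)) : m ≤ d := by
  by_contra! hd
  exact h (by simp [Nat.div_eq_of_lt hd])

lemma partner_div (hm : 0 < m) :
    partner m d / m = if Even (d / m) then d / m + 1 else d / m - 1 := by
  unfold partner
  split_ifs
  · exact Nat.add_div_right d hm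
  · simpa using Nat.sub_mul_div d m 1

lemma even_partner_div_iff (hm : 0 < m) : Even (partner m d / m) ↔ ¬Even (d / m) := by
  rw [partner_div hm]
  split_ifs <;> simp only [Nat.even_iff] at * <;> omega

lemma partner_partner (hm : 0 < m) : partner m (partner m d) = d := by
  have h := even_partner_div_iff (d := d) hm
  by_cases hd : Even (d / m)
  · have hp : ¬Even (partner m d / m) := fun hp => h.mp hp hd
    rw [partner, if_neg hp, partner, if_pos hd, Nat.add_sub_cancel]
  · rw [partner, if_pos (h.mpr hd), partner, if_neg hd, Nat.sub_add_cancel (le_of_not_even_div hd)]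

lemma partner_lt {N : ℕ} (hm : 0 < m) (hd : d < 2 * N * m) : partner m d < 2 * N * m := by
  unfold partner
  split_ifs with h
  · rw [← Nat.div_lt_iff_lt_mul hm] at hd ⊢
    rw [Nat.add_div_right d hm]
    obtain ⟨k, hk⟩ := h
    omega
  · exact (Nat.sub_le d m).trans_lt hd

lemma neg_one_pow_partner_div {R : Type*} [Ring R] (hm : 0 < m) :
    (-1 : R) ^ (partner m d / m) = -(-1) ^ (d / m) := by
  have h := even_partner_div_iff (d := d) hm
  rcases Nat.even_or_odd (d / m) with hd | hd
  · rw [hd.neg_one_pow, (Nat.not_even_iff_odd.mp (h.not.mpr (not_not.mpr hd))).neg_one_pow]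
  · rw [hd.neg_one_pow, (h.mpr (Nat.not_even_iff_odd.mpr hd)).neg_one_pow, neg_neg]

lemma cast_partner {R : Type*} [Ring R] : (partner m d : R) = d + (-1) ^ (d / m) * m := by
  unfold partner
  split_ifs with h
  · simp [h.neg_one_pow]
  · simp [(Nat.not_even_iff_odd.mp h).neg_one_pow, Nat.cast_sub (le_of_not_even_div h),
      sub_eq_add_neg]

end partner

namespace MeasureTheory.Measure

lemma map_eq_self_of_comp_eq_involution {α ι : Type*} [MeasurableSpace α] {μ : Measure α}
    {s : Finset ι} {c : ℝ≥0∞} {f : ι → α → α} {g : α → α} {σ : ι → ι}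
    (hf : ∀ i, Measurable (f i)) (hg : Measurable g)
    (hσ : ∀ i ∈ s, σ i ∈ s) (hσσ : ∀ i ∈ s, σ (σ i) = i) (hgf : ∀ i ∈ s, g ∘ f i = f (σ i))
    (hμ : μ = c • ∑ i ∈ s, μ.map (f i)) :
    μ.map g = μ := by
  calc μ.map g = c • ∑ i ∈ s, (μ.map (f i)).map g := by
        conv_lhs => rw [hμ]
        rw [Measure.map_smul, map_finset_sum hg.aemeasurable]
    _ = c • ∑ i ∈ s, μ.map (f (σ i)) := by
        congr 1
        refine Finset.sum_congr rfl fun i hi => ?_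
        rw [map_map hg (hf i), hgf i hi]
    _ = μ := by
        rw [Finset.sum_nbij' (g := fun i => μ.map (f i)) σ σ hσ hσ hσσ hσσ fun _ _ => rfl, ← hμ]

end MeasureTheory.Measure

lemma integral_exp_neg_mul_of_map_neg_sub_eq_self (ν : Measure ℝ) (a t : ℝ)
    (h : ν.map (fun x => -x - a) = ν) :
    ∫ x, Complex.exp (2 * Real.pi * Complex.I * ((-t : ℝ) : ℂ) * x) ∂ν =
      Complex.exp (2 * Real.pi * Complex.I * a * t) *
        ∫ x, Complex.exp (2 * Real.pi * Complex.I * t * x) ∂ν := by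
  conv_rhs => rw [← h]
  rw [integral_map (by fun_prop) (Continuous.aestronglyMeasurable (by fun_prop)),
    ← integral_const_mul]
  congr 1 with x
  rw [← Complex.exp_add]
  push_cast
  ring_nf

theorem ft_reflection_general (m N : ℕ) (hm : 0 < m) (ρ : ℝ) (ν : Measure ℝ)
    (hself : ν = (2 * N * m : ℝ≥0∞)⁻¹ • ∑ d ∈ Finset.range (2 * N * m),
      Measure.map (fun x : ℝ => (-1 : ℝ) ^ (d / m) * ρ * (x + (d : ℝ))) ν) :
    ∀ t : ℝ, (∫ x, Complex.exp (2 * (Real.pi : ℂ) * Complex.I * ((-t : ℝ) : ℂ) * (x : ℂ)) ∂ν)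
      = Complex.exp (2 * (Real.pi : ℂ) * Complex.I * ((m : ℂ) * (ρ : ℂ)) * (t : ℂ)) *
        ∫ x, Complex.exp (2 * (Real.pi : ℂ) * Complex.I * (t : ℂ) * (x : ℂ)) ∂ν := by
  intro t
  have hsymm : ν.map (fun x => -x - m * ρ) = ν := by
    refine Measure.map_eq_self_of_comp_eq_involution (fun d => by fun_prop) (by fun_prop)
      (fun d hd => Finset.mem_range.mpr (partner_lt hm (Finset.mem_range.mp hd)))
      (fun d _ => partner_partner hm) (fun d _ => ?_) hself
    ext x
    simp only [Function.comp_apply, neg_one_pow_partner_div hm, cast_partner]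
    have hsq : ((-1 : ℝ) ^ (d / m)) ^ 2 = 1 := by
      rw [← pow_mul, mul_comm, pow_mul, neg_one_sq, one_pow]
    linear_combination (m * ρ) * hsq
  simpa using integral_exp_neg_mul_of_map_neg_sub_eq_self ν (m * ρ) t hsymm

/-- if `ν` is the self-similar probability measure for the IFS
`τ_d(x) = (-1)^{⌊d/m⌋} ρ (x+d)`, `d = 0,...,2Nm-1`, with equal weights, then
`ν̂(-t) = e^{2πi m ρ t} ν̂(t)` for all `t ∈ ℝ`. -/
theorem ft_reflection (m N : ℕ) (hm : 0 < m) (hN : 0 < N) (ρ : ℝ)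
    (hρ : ρ ∈ Set.Ioo (0 : ℝ) 1) (ν : Measure ℝ) [IsProbabilityMeasure ν]
    (hself : ν = (2 * N * m : ℝ≥0∞)⁻¹ • ∑ d ∈ Finset.range (2 * N * m),
      Measure.map (fun x : ℝ => (-1 : ℝ) ^ (d / m) * ρ * (x + (d : ℝ))) ν) :
    ∀ t : ℝ, (∫ x, Complex.exp (2 * (Real.pi : ℂ) * Complex.I * ((-t : ℝ) : ℂ) * (x : ℂ)) ∂ν)
      = Complex.exp (2 * (Real.pi : ℂ) * Complex.I * ((m : ℂ) * (ρ : ℂ)) * (t : ℂ)) *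
        ∫ x, Complex.exp (2 * (Real.pi : ℂ) * Complex.I * (t : ℂ) * (x : ℂ)) ∂ν :=
  ft_reflection_general m N hm ρ ν hself
end

section
/- Fix m, N ∈ ℕ⁺ and ρ ∈ (0,1). Let ν be the self-similar measure for the IFS {τ_d(x) = (-1)^{⌊d/m⌋}ρ(x+d)}_{d=0}^{2Nm-1} with equal weights, and let μ be the self-similar measure for the IFS {x ↦ ρ(x+d)}_{d∈D} with equal weights, where D = D_m ⊕ 2mD_N ⊕ (1+mρ-2Nm)D_2. Then ν = μ. -/
/-!
The digit set `D` is symmetric: `d ↦ mρ - m - d` permutes it. Hence the reflection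
`R x = -x - mρ` conjugates the uniform IFS to itself, so `R_* μ` satisfies the equation of `μ`
and, by uniqueness, `R_* μ = μ`. Every map of the alternating IFS with `⌊d/m⌋` even is a map
`x ↦ ρ(x + d')` of the uniform IFS, and every map with `⌊d/m⌋` odd is such a map composed with
`R`; these account for each digit of `D` exactly once. Since `R_* μ = μ`, the measure `μ`
satisfies the self-similarity equation of `ν`, and uniqueness gives `ν = μ`.

Uniqueness is proved on characteristic functions: the difference `δ` of the characteristic
functions of two solutions satisfies `‖δ t‖ ≤ max_k ‖δ (a_k t)‖`, so iterating the contractions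
drives `t` to `0`, where `δ` is continuous and vanishes.
-/

open MeasureTheory Finset Filter Topology Complex
open scoped ENNReal

variable {ι : Type*}

lemma charFun_finsetSum_measure (s : Finset ι) (μ : ι → Measure ℝ)
    [∀ k, IsFiniteMeasure (μ k)] (t : ℝ) : charFun (∑ k ∈ s, μ k) t = ∑ k ∈ s, charFun (μ k) t :=
  integral_finsetSum_measure fun k _ =>
    Integrable.of_bound (by fun_prop) 1 (ae_of_all _ fun x => by rw [norm_exp_ofReal_mul_I])

lemma charFun_map_mul_add (μ : Measure ℝ) (a b t : ℝ) :
    charFun (μ.map fun x => a * x + b) t = charFun μ (a * t) * cexp (b * t * I) := by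
  rw [show (fun x => a * x + b) = (· + b) ∘ (a * ·) from rfl,
    ← Measure.map_map (by fun_prop) (by fun_prop), charFun_map_add_const, charFun_map_mul]
  simp [mul_comm]

lemma eq_zero_of_forall_norm_le_norm_of_contract {E F : Type*} [SeminormedAddCommGroup E]
    [NormedAddCommGroup F] {f : E → F} (hf : Tendsto f (𝓝 0) (𝓝 0)) {r : ℝ} (hr₀ : 0 ≤ r)
    (hr : r < 1) (h : ∀ x, ∃ y, ‖y‖ ≤ r * ‖x‖ ∧ ‖f x‖ ≤ ‖f y‖) (x : E) : f x = 0 := by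
  choose g hg_norm hg_le using h
  have h_norm : ∀ n, ‖g^[n] x‖ ≤ r ^ n * ‖x‖ := by
    intro n
    induction n with
    | zero => simp
    | succ n ih =>
      rw [Function.iterate_succ_apply', pow_succ', mul_assoc]
      exact (hg_norm _).trans (mul_le_mul_of_nonneg_left ih hr₀)
  have h_le : ∀ n, ‖f x‖ ≤ ‖f (g^[n] x)‖ := by
    intro n
    induction n with
    | zero => simp
    | succ n ih => exact ih.trans (by rw [Function.iterate_succ_apply']; exact hg_le _)
  have h_tendsto : Tendsto (fun n => g^[n] x) atTop (𝓝 0) := by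
    refine tendsto_zero_iff_norm_tendsto_zero.2 <|
      squeeze_zero (fun _ => norm_nonneg _) h_norm ?_
    simpa using (tendsto_pow_atTop_nhds_zero_of_lt_one hr₀ hr).mul_const ‖x‖
  exact norm_le_zero_iff.1 <| ge_of_tendsto' (by simpa using (hf.comp h_tendsto).norm) h_le

def IsSelfSimilar {X : Type*} [MeasurableSpace X] (s : Finset ι) (f : ι → X → X)
    (μ : Measure X) : Prop :=
  μ = (#s : ℝ≥0∞)⁻¹ • ∑ k ∈ s, μ.map (f k)

namespace IsSelfSimilar

variable {X : Type*} [MeasurableSpace X] {s : Finset ι} {f : ι → X → X} {μ : Measure X}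

lemma nonempty [NeZero μ] (hμ : IsSelfSimilar s f μ) : s.Nonempty := by
  rw [nonempty_iff_ne_empty]
  rintro rfl
  exact NeZero.ne μ (by simpa [IsSelfSimilar] using hμ)

variable {f : ι → ℝ → ℝ} {a b : ι → ℝ} {μ ν : Measure ℝ}

lemma charFun_eq [IsFiniteMeasure μ] (hμ : IsSelfSimilar s f μ)
    (hf : ∀ k x, f k x = a k * x + b k) (t : ℝ) :
    charFun μ t = (#s : ℂ)⁻¹ * ∑ k ∈ s, charFun μ (a k * t) * cexp (b k * t * I) := by
  have hf' : f = fun k x => a k * x + b k := funext₂ hf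
  subst hf'
  conv_lhs => rw [hμ]
  rw [charFun_apply, integral_smul_measure, ← charFun_apply, charFun_finsetSum_measure]
  simp [charFun_map_mul_add]

theorem unique [IsProbabilityMeasure μ] [IsProbabilityMeasure ν] (hμ : IsSelfSimilar s f μ)
    (hν : IsSelfSimilar s f ν) (hf : ∀ k x, f k x = a k * x + b k) (ha : ∀ k ∈ s, |a k| < 1) :
    μ = ν := by
  obtain ⟨k₀, hk₀, hk₀_max⟩ := s.exists_max_image (fun k => |a k|) hμ.nonempty
  set δ := charFun μ - charFun ν with hδ
  suffices ∀ t, δ t = 0 from Measure.ext_of_charFun (funext fun t => sub_eq_zero.1 (this t))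
  refine eq_zero_of_forall_norm_le_norm_of_contract ?_ (abs_nonneg (a k₀)) (ha k₀ hk₀) ?_
  · simpa [δ] using ((continuous_charFun (μ := μ)).sub (continuous_charFun (μ := ν))).tendsto 0
  intro t
  have h_avg : ‖δ t‖ ≤ (#s : ℝ)⁻¹ * ∑ k ∈ s, ‖δ (a k * t)‖ := by
    have : δ t = (#s : ℂ)⁻¹ * ∑ k ∈ s, δ (a k * t) * cexp (b k * t * I) := by
      rw [hδ, Pi.sub_apply, hμ.charFun_eq hf t, hν.charFun_eq hf t, ← mul_sub,
        ← sum_sub_distrib]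
      simp only [sub_mul, Pi.sub_apply]
    rw [this, norm_mul, norm_inv, norm_natCast]
    gcongr
    refine (norm_sum_le _ _).trans_eq (sum_congr rfl fun k _ => ?_)
    rw [norm_mul, ← ofReal_mul, norm_exp_ofReal_mul_I, mul_one]
  obtain ⟨k, hk, hk_le⟩ : ∃ k ∈ s, ‖δ t‖ ≤ ‖δ (a k * t)‖ := by
    refine exists_le_of_sum_le hμ.nonempty ?_
    rwa [sum_const, nsmul_eq_mul,
      ← le_inv_mul_iff₀ (by exact_mod_cast hμ.nonempty.card_pos)]
  refine ⟨a k * t, ?_, hk_le⟩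
  rw [norm_mul]
  exact mul_le_mul_of_nonneg_right (hk₀_max k hk) (norm_nonneg t)

end IsSelfSimilar

section Reindexing

variable {M : Type*} [AddCommMonoid M]

lemma sum_range_mul (f : ℕ → M) (n m : ℕ) :
    ∑ d ∈ range (n * m), f d = ∑ k ∈ range n, ∑ i ∈ range m, f (m * k + i) := by
  induction n with
  | zero => simp
  | succ n ih => rw [Nat.succ_mul, sum_range_add, ih, sum_range_succ, mul_comm n m]

lemma sum_range_two_mul_mul (f : ℕ → M) (N m : ℕ) :
    ∑ d ∈ range (2 * N * m), f d =
      ∑ j ∈ range N, ∑ i ∈ range m, (f (m * (2 * j) + i) + f (m * (2 * j + 1) + i)) := by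
  rw [mul_comm 2 N, sum_range_mul, sum_range_mul]
  simp [sum_range_succ, sum_add_distrib]

lemma sum_range_product_range_two (g : ℕ × ℕ × ℕ → M) (m N : ℕ) :
    ∑ q ∈ range m ×ˢ range N ×ˢ range 2, g q =
      ∑ i ∈ range m, ∑ j ∈ range N, (g (i, j, 0) + g (i, j, 1)) := by
  simp [sum_product, sum_range_succ]

lemma sum_range_reflect₂ (g : ℕ → ℕ → M) (m N : ℕ) :
    ∑ i ∈ range m, ∑ j ∈ range N, g (m - 1 - i) (N - 1 - j) =
      ∑ i ∈ range m, ∑ j ∈ range N, g i j := by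
  rw [← sum_range_reflect (fun i => ∑ j ∈ range N, g i j)]
  exact sum_congr rfl fun i _ => sum_range_reflect (g (m - 1 - i)) N

lemma sum_range_product_range_two_reflect (g : ℕ × ℕ × ℕ → M) (m N : ℕ) :
    ∑ q ∈ range m ×ˢ range N ×ˢ range 2, g (m - 1 - q.1, N - 1 - q.2.1, 1 - q.2.2) =
      ∑ q ∈ range m ×ˢ range N ×ˢ range 2, g q := by
  simp only [sum_range_product_range_two, sum_add_distrib, Nat.sub_zero, Nat.sub_self]
  rw [sum_range_reflect₂ (fun i j => g (i, j, 1)), sum_range_reflect₂ (fun i j => g (i, j, 0)),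
    add_comm]

end Reindexing

def uniformDigit (m N : ℕ) (ρ : ℝ) (q : ℕ × ℕ × ℕ) : ℝ :=
  (q.1 : ℝ) + 2 * m * (q.2.1 : ℝ) + (1 + m * ρ - 2 * N * m) * (q.2.2 : ℝ)

def uniformMap (m N : ℕ) (ρ : ℝ) (q : ℕ × ℕ × ℕ) (x : ℝ) : ℝ := ρ * (x + uniformDigit m N ρ q)

def alternatingMap (m : ℕ) (ρ : ℝ) (d : ℕ) (x : ℝ) : ℝ := (-1 : ℝ) ^ (d / m) * ρ * (x + (d : ℝ))

section Digits

variable {m N : ℕ} {ρ : ℝ}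

@[fun_prop]
lemma measurable_uniformMap (q : ℕ × ℕ × ℕ) : Measurable (uniformMap m N ρ q) := by
  unfold uniformMap
  fun_prop

lemma uniformDigit_reflect {q : ℕ × ℕ × ℕ} (hq : q ∈ range m ×ˢ range N ×ˢ range 2) :
    uniformDigit m N ρ (m - 1 - q.1, N - 1 - q.2.1, 1 - q.2.2) =
      m * ρ - m - uniformDigit m N ρ q := by
  simp only [mem_product, mem_range] at hq
  simp only [uniformDigit, Nat.sub_sub]
  push_cast [Nat.cast_sub (show 1 + q.1 ≤ m by omega),
    Nat.cast_sub (show 1 + q.2.1 ≤ N by omega), Nat.cast_sub (show q.2.2 ≤ 1 by omega)]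
  ring

lemma alternatingMap_even {i : ℕ} (hi : i < m) (j : ℕ) :
    alternatingMap m ρ (m * (2 * j) + i) = uniformMap m N ρ (i, j, 0) := by
  funext x
  rw [alternatingMap, Nat.mul_add_div (by omega), Nat.div_eq_of_lt hi, add_zero,
    (even_two_mul j).neg_one_pow, uniformMap, uniformDigit]
  push_cast
  ring

lemma alternatingMap_odd {i j : ℕ} (hi : i < m) (hj : j < N) :
    alternatingMap m ρ (m * (2 * j + 1) + i) =
      uniformMap m N ρ (m - 1 - i, N - 1 - j, 1) ∘ fun x => -x - m * ρ := by
  funext x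
  have h := uniformDigit_reflect (m := m) (N := N) (ρ := ρ) (q := (i, j, 0))
    (by simp [hi, hj])
  rw [alternatingMap, Nat.mul_add_div (by omega), Nat.div_eq_of_lt hi, add_zero,
    (odd_two_mul_add_one j).neg_one_pow, Function.comp_apply, uniformMap]
  simp only [Nat.sub_zero] at h
  rw [h, uniformDigit]
  push_cast
  ring

lemma IsSelfSimilar.map_neg_sub_eq_self (hρ : |ρ| < 1) {μ : Measure ℝ}
    [IsProbabilityMeasure μ]
    (hμ : IsSelfSimilar (range m ×ˢ range N ×ˢ range 2) (uniformMap m N ρ) μ) :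
    μ.map (fun x => -x - m * ρ) = μ := by
  have : IsProbabilityMeasure (μ.map fun x => -x - m * ρ) :=
    Measure.isProbabilityMeasure_map (by fun_prop)
  have h_reflect : IsSelfSimilar (range m ×ˢ range N ×ˢ range 2) (uniformMap m N ρ)
      (μ.map fun x => -x - m * ρ) := by
    unfold IsSelfSimilar
    conv_lhs => rw [hμ]
    rw [Measure.map_smul, Measure.map_finset_sum (by fun_prop),
      ← sum_range_product_range_two_reflect]
    refine congrArg _ (sum_congr rfl fun q hq => ?_)
    rw [Measure.map_map (by fun_prop) (by fun_prop), Measure.map_map (by fun_prop) (by fun_prop)]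
    congr 1
    funext x
    simp only [Function.comp_apply, uniformMap, uniformDigit_reflect hq]
    ring
  exact h_reflect.unique hμ (a := fun _ => ρ) (b := fun q => ρ * uniformDigit m N ρ q)
    (fun q x => mul_add ρ x _) (fun _ _ => hρ)

lemma sum_map_alternatingMap_eq_sum_map_uniformMap {μ : Measure ℝ}
    (hμ : μ.map (fun x => -x - m * ρ) = μ) :
    ∑ d ∈ range (2 * N * m), μ.map (alternatingMap m ρ d) =
      ∑ q ∈ range m ×ˢ range N ×ˢ range 2, μ.map (uniformMap m N ρ q) := by
  calc ∑ d ∈ range (2 * N * m), μ.map (alternatingMap m ρ d)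
      = ∑ i ∈ range m, ∑ j ∈ range N,
          (μ.map (uniformMap m N ρ (i, j, 0)) +
            μ.map (uniformMap m N ρ (m - 1 - i, N - 1 - j, 1))) := by
        rw [sum_range_two_mul_mul, sum_comm]
        refine sum_congr rfl fun i hi => sum_congr rfl fun j hj => ?_
        rw [mem_range] at hi hj
        rw [alternatingMap_even hi, alternatingMap_odd hi hj,
          ← Measure.map_map (by fun_prop) (by fun_prop), hμ]
    _ = ∑ i ∈ range m, ∑ j ∈ range N,
          (μ.map (uniformMap m N ρ (i, j, 0)) + μ.map (uniformMap m N ρ (i, j, 1))) := by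
        simp only [sum_add_distrib]
        rw [sum_range_reflect₂ (fun i j => μ.map (uniformMap m N ρ (i, j, 1)))]
    _ = _ := (sum_range_product_range_two (fun q => μ.map (uniformMap m N ρ q)) m N).symm

end Digits

theorem alternating_eq_uniform_general (m N : ℕ) (ρ : ℝ)
    (hρ : ρ ∈ Set.Ioo (0 : ℝ) 1)
    (ν μ : Measure ℝ) [IsProbabilityMeasure ν] [IsProbabilityMeasure μ]
    (hν : ν = (2 * N * m : ℝ≥0∞)⁻¹ • ∑ d ∈ Finset.range (2 * N * m),
      Measure.map (fun x : ℝ => (-1 : ℝ) ^ (d / m) * ρ * (x + (d : ℝ))) ν)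
    (hμ : μ = (2 * N * m : ℝ≥0∞)⁻¹ •
      ∑ q ∈ Finset.range m ×ˢ Finset.range N ×ˢ Finset.range 2,
        Measure.map (fun x : ℝ => ρ * (x + ((q.1 : ℝ) + 2 * m * (q.2.1 : ℝ) +
          (1 + m * ρ - 2 * N * m) * (q.2.2 : ℝ)))) μ) :
    ν = μ := by
  have hρ' : |ρ| < 1 := abs_lt.2 ⟨by linarith [hρ.1], hρ.2⟩
  have h_card : (2 * N * m : ℝ≥0∞) = #(range (2 * N * m)) := by simp
  have h_card' : (2 * N * m : ℝ≥0∞) = #(range m ×ˢ range N ×ˢ range 2) := by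
    simp only [card_product, card_range]; push_cast; ring
  have hν' : IsSelfSimilar (range (2 * N * m)) (alternatingMap m ρ) ν := by
    rwa [IsSelfSimilar, ← h_card]
  have hμ' : IsSelfSimilar (range m ×ˢ range N ×ˢ range 2) (uniformMap m N ρ) μ := by
    rwa [IsSelfSimilar, ← h_card']
  have hμ_alt : IsSelfSimilar (range (2 * N * m)) (alternatingMap m ρ) μ := by
    rw [IsSelfSimilar,
      sum_map_alternatingMap_eq_sum_map_uniformMap (hμ'.map_neg_sub_eq_self hρ'), ← h_card, h_card']
    exact hμ'
  refine hν'.unique hμ_alt (a := fun d => (-1) ^ (d / m) * ρ)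
    (b := fun d => (-1) ^ (d / m) * ρ * d) (fun d x => mul_add _ x _) fun d _ => ?_
  rwa [abs_mul, abs_pow, abs_neg, abs_one, one_pow, one_mul]

/-- the self-similar measure `ν` for the IFS
`{τ_d(x) = (-1)^{⌊d/m⌋} ρ(x+d)}_{d=0}^{2Nm-1}` (equal weights) coincides with the
self-similar measure `μ` for the IFS `{x ↦ ρ(x+d)}_{d ∈ D}` with
`D = D_m ⊕ 2mD_N ⊕ (1+mρ-2Nm)D_2`. -/
theorem alternating_eq_uniform (m N : ℕ) (hm : 0 < m) (hN : 0 < N) (ρ : ℝ)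
    (hρ : ρ ∈ Set.Ioo (0 : ℝ) 1)
    (ν μ : Measure ℝ) [IsProbabilityMeasure ν] [IsProbabilityMeasure μ]
    (hν : ν = (2 * N * m : ℝ≥0∞)⁻¹ • ∑ d ∈ Finset.range (2 * N * m),
      Measure.map (fun x : ℝ => (-1 : ℝ) ^ (d / m) * ρ * (x + (d : ℝ))) ν)
    (hμ : μ = (2 * N * m : ℝ≥0∞)⁻¹ •
      ∑ q ∈ Finset.range m ×ˢ Finset.range N ×ˢ Finset.range 2,
        Measure.map (fun x : ℝ => ρ * (x + ((q.1 : ℝ) + 2 * m * (q.2.1 : ℝ) +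
          (1 + m * ρ - 2 * N * m) * (q.2.2 : ℝ)))) μ) :
    ν = μ :=
  alternating_eq_uniform_general m N ρ hρ ν μ hν hμ
end

section
/- Let ν be the self-similar measure with equal weights for the IFS {τ_d(x) = (-1)^d ρ(x+d)} indexed by d ∈ {-n,...,-1,0,1,...,n} (n ∈ ℕ⁺, 0<ρ<1, digit set symmetric). Then ν̂(t) = ν̂(-t) for all t ∈ ℝ. -/
open MeasureTheory
open scoped ENNReal

noncomputable def ee (u : ℝ) : ℂ := Complex.exp (2 * (Real.pi : ℂ) * Complex.I * (u : ℂ))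

lemma ee_norm (u : ℝ) : ‖ee u‖ = 1 := by
  have h : (2 * (Real.pi : ℂ) * Complex.I * (u : ℂ))
      = ((2 * Real.pi * u : ℝ) : ℂ) * Complex.I := by push_cast; ring
  rw [ee, h]
  exact Complex.norm_exp_ofReal_mul_I _

lemma ee_add (u v : ℝ) : ee (u + v) = ee u * ee v := by
  rw [ee, ee, ee, ← Complex.exp_add]
  push_cast
  ring_nf

lemma ee_continuous : Continuous ee := by
  apply Complex.continuous_exp.comp
  fun_prop

lemma ee_integrable (μ : Measure ℝ) [IsFiniteMeasure μ] (g : ℝ → ℝ) (hg : Continuous g) :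
    Integrable (fun x => ee (g x)) μ := by
  refine (integrable_const (1 : ℝ)).mono' ?_ ?_
  · exact (ee_continuous.comp hg).aestronglyMeasurable
  · filter_upwards with x
    exact le_of_eq (ee_norm _)

lemma neg_one_zpow_inv (d : ℤ) : ((-1 : ℝ) ^ d)⁻¹ = (-1 : ℝ) ^ d := by
  rw [← inv_zpow, inv_neg, inv_one]

/-- for the self-similar measure `ν` of the IFS
`{τ_d(x) = (-1)^d ρ(x+d)}_{d ∈ {-n,...,n}}` with equal weights (symmetric digit set),
the Fourier transform is even: `ν̂(t) = ν̂(-t)`. -/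
theorem ft_symmetric (n : ℕ) (hn : 0 < n) (ρ : ℝ) (hρ : ρ ∈ Set.Ioo (0 : ℝ) 1)
    (ν : Measure ℝ) [IsProbabilityMeasure ν]
    (hself : ν = (2 * n + 1 : ℝ≥0∞)⁻¹ • ∑ d ∈ Finset.Icc (-(n : ℤ)) (n : ℤ),
      Measure.map (fun x : ℝ => (-1 : ℝ) ^ d * ρ * (x + (d : ℝ))) ν) :
    ∀ t : ℝ, (∫ x, Complex.exp (2 * (Real.pi : ℂ) * Complex.I * (t : ℂ) * (x : ℂ)) ∂ν)
      = ∫ x, Complex.exp (2 * (Real.pi : ℂ) * Complex.I * ((-t : ℝ) : ℂ) * (x : ℂ)) ∂ν := by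
  classical
  set S : Finset ℤ := Finset.Icc (-(n : ℤ)) (n : ℤ) with hS
  set F : ℝ → ℂ := fun t => ∫ x, ee (t * x) ∂ν with hF
  set f : ℝ → ℂ := fun t => F t - F (-t) with hf
  -- continuity of F
  have hτmeas : ∀ d : ℤ, Measurable (fun x : ℝ => (-1 : ℝ) ^ d * ρ * (x + (d : ℝ))) := by
    intro d; fun_prop
  have hFcont : Continuous F := by
    apply continuous_of_dominated (bound := fun _ => (1 : ℝ))
    · intro t
      exact (ee_continuous.comp (continuous_const.mul continuous_id)).aestronglyMeasurable
    · intro t; filter_upwards with x; exact le_of_eq (ee_norm _)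
    · exact integrable_const 1
    · filter_upwards with x
      exact ee_continuous.comp (continuous_id.mul continuous_const)
  -- cardinality of S
  have hcard : S.card = 2 * n + 1 := by
    rw [hS, Int.card_Icc]
    omega
  -- the expansion lemma
  have hexp : ∀ s : ℝ, F s = ((2 * n + 1 : ℝ))⁻¹ *
      ∑ d ∈ S, ee (s * ((-1 : ℝ) ^ d * ρ * d)) * F ((-1 : ℝ) ^ d * ρ * s) := by
    intro s
    have hι : ∀ d ∈ S, Integrable (fun x => ee (s * x))
        (Measure.map (fun x : ℝ => (-1 : ℝ) ^ d * ρ * (x + (d : ℝ))) ν) := by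
      intro d _
      have : IsProbabilityMeasure
          (Measure.map (fun x : ℝ => (-1 : ℝ) ^ d * ρ * (x + (d : ℝ))) ν) :=
        Measure.isProbabilityMeasure_map (hτmeas d).aemeasurable
      exact ee_integrable _ _ (by fun_prop)
    have step1 : F s = ((2 * n + 1 : ℝ≥0∞)⁻¹).toReal • ∑ d ∈ S, ∫ x, ee (s * x)
        ∂(Measure.map (fun x : ℝ => (-1 : ℝ) ^ d * ρ * (x + (d : ℝ))) ν) := by
      show (∫ x, ee (s * x) ∂ν) = _
      conv_lhs => rw [hself]
      rw [integral_smul_measure, integral_finset_sum_measure hι]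
    rw [step1]
    have htr : ((2 * n + 1 : ℝ≥0∞)⁻¹).toReal = ((2 * n + 1 : ℝ))⁻¹ := by
      rw [ENNReal.toReal_inv]
      congr 1
    rw [htr, Complex.real_smul]
    push_cast
    congr 1
    apply Finset.sum_congr rfl
    intro d _
    have hm : AEStronglyMeasurable (fun x : ℝ => ee (s * x))
        (Measure.map (fun x : ℝ => (-1 : ℝ) ^ d * ρ * (x + (d : ℝ))) ν) :=
      (ee_continuous.comp (continuous_const.mul continuous_id)).aestronglyMeasurable
    rw [integral_map (hτmeas d).aemeasurable hm]
    have heq : ∀ x : ℝ, ee (s * ((-1 : ℝ) ^ d * ρ * (x + (d : ℝ))))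
        = ee (s * ((-1 : ℝ) ^ d * ρ * d)) * ee (((-1 : ℝ) ^ d * ρ * s) * x) := by
      intro x
      rw [← ee_add]
      ring_nf
    simp only [heq]
    rw [integral_const_mul]
  -- reindexed expansion for F (-t)
  have hexpneg : ∀ t : ℝ, F (-t) = ((2 * n + 1 : ℝ))⁻¹ *
      ∑ d ∈ S, ee (t * ((-1 : ℝ) ^ d * ρ * d)) * F (-((-1 : ℝ) ^ d * ρ * t)) := by
    intro t
    rw [hexp (-t)]
    congr 1
    refine Finset.sum_equiv (Equiv.neg ℤ) ?_ ?_
    · intro d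
      simp only [Equiv.neg_apply, hS, Finset.mem_Icc]
      omega
    · intro d _
      have hpow : (-1 : ℝ) ^ (-d) = (-1 : ℝ) ^ d := by
        rw [zpow_neg, neg_one_zpow_inv]
      simp only [Equiv.neg_apply, hpow, Int.cast_neg]
      have h1 : (-t) * ((-1 : ℝ) ^ d * ρ * d) = t * ((-1 : ℝ) ^ d * ρ * (-(d : ℝ))) := by ring
      have h2 : (-1 : ℝ) ^ d * ρ * (-t) = -((-1 : ℝ) ^ d * ρ * t) := by ring
      rw [h1, h2]
  -- key identity
  have hkey : ∀ t : ℝ, f t = ((2 * n + 1 : ℝ))⁻¹ *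
      ∑ d ∈ S, ee (t * ((-1 : ℝ) ^ d * ρ * d)) * f ((-1 : ℝ) ^ d * ρ * t) := by
    intro t
    rw [hf]
    simp only
    rw [hexp t, hexpneg t, ← mul_sub, ← Finset.sum_sub_distrib]
    congr 1
    apply Finset.sum_congr rfl
    intro d _
    ring
  -- norm of f at negatives
  have hfneg : ∀ s : ℝ, ‖f (-s)‖ = ‖f s‖ := by
    intro s
    simp only [hf, neg_neg]
    rw [← norm_neg]
    congr 1
    ring
  -- the contraction inequality
  have hineq : ∀ t : ℝ, ‖f t‖ ≤ ‖f (ρ * t)‖ := by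
    intro t
    rw [hkey t]
    have h1 : ∀ d ∈ S, ‖ee (t * ((-1 : ℝ) ^ d * ρ * d)) * f ((-1 : ℝ) ^ d * ρ * t)‖
        = ‖f (ρ * t)‖ := by
      intro d _
      rw [norm_mul, ee_norm, one_mul]
      rcases Int.even_or_odd d with h | h
      · rw [h.neg_one_zpow, one_mul]
      · rw [h.neg_one_zpow]
        rw [show (-1 : ℝ) * ρ * t = -(ρ * t) by ring, hfneg]
    calc ‖((2 * n + 1 : ℝ))⁻¹ *
        ∑ d ∈ S, ee (t * ((-1 : ℝ) ^ d * ρ * d)) * f ((-1 : ℝ) ^ d * ρ * t)‖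
        ≤ ((2 * n + 1 : ℝ))⁻¹ * ∑ d ∈ S, ‖ee (t * ((-1 : ℝ) ^ d * ρ * d)) * f ((-1 : ℝ) ^ d * ρ * t)‖ := by
          rw [norm_mul]
          gcongr
          · rw [Complex.norm_real, Real.norm_eq_abs, abs_of_nonneg (by positivity)]
          · exact norm_sum_le _ _
      _ = ((2 * n + 1 : ℝ))⁻¹ * ∑ _d ∈ S, ‖f (ρ * t)‖ := by
          rw [Finset.sum_congr rfl h1]
      _ = ‖f (ρ * t)‖ := by
          rw [Finset.sum_const, hcard]
          simp only [nsmul_eq_mul]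
          have hc : ((2 * n + 1 : ℕ) : ℝ) = 2 * (n : ℝ) + 1 := by push_cast; ring
          rw [← mul_assoc, hc, inv_mul_cancel₀ (by positivity), one_mul]
  -- iterate
  have hiter : ∀ t : ℝ, ∀ k : ℕ, ‖f t‖ ≤ ‖f (ρ ^ k * t)‖ := by
    intro t k
    induction k with
    | zero => simp
    | succ k ih =>
      refine ih.trans ?_
      have := hineq (ρ ^ k * t)
      rw [show ρ * (ρ ^ k * t) = ρ ^ (k + 1) * t by ring] at this
      exact this
  -- limit
  have hf0 : f 0 = 0 := by simp [hf]
  have hzero : ∀ t : ℝ, f t = 0 := by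
    intro t
    have hρ0 := hρ.1
    have hρ1 := hρ.2
    have htend : Filter.Tendsto (fun k : ℕ => ρ ^ k * t) Filter.atTop (nhds 0) := by
      have : Filter.Tendsto (fun k : ℕ => ρ ^ k) Filter.atTop (nhds 0) :=
        tendsto_pow_atTop_nhds_zero_of_lt_one (le_of_lt hρ0) hρ1
      simpa using this.mul_const t
    have hfcont : Continuous f := by
      rw [hf]; exact hFcont.sub (hFcont.comp continuous_neg)
    have htend2 : Filter.Tendsto (fun k : ℕ => ‖f (ρ ^ k * t)‖) Filter.atTop (nhds 0) := by
      have := (hfcont.tendsto 0).comp htend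
      rw [hf0] at this
      simpa using this.norm
    have : ‖f t‖ ≤ 0 :=
      ge_of_tendsto htend2 (Filter.Eventually.of_forall (fun k => hiter t k))
    exact norm_le_zero_iff.mp this
  -- conclude
  intro t
  have h := sub_eq_zero.mp (hzero t)
  have hFt : F t = F (-t) := h
  have e1 : (∫ x, Complex.exp (2 * (Real.pi : ℂ) * Complex.I * (t : ℂ) * (x : ℂ)) ∂ν) = F t := by
    rw [hF]
    apply integral_congr_ae
    filter_upwards with x
    rw [ee]
    push_cast
    ring_nf
  have e2 : (∫ x, Complex.exp (2 * (Real.pi : ℂ) * Complex.I * ((-t : ℝ) : ℂ) * (x : ℂ)) ∂ν)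
      = F (-t) := by
    rw [hF]
    apply integral_congr_ae
    filter_upwards with x
    rw [ee]
    push_cast
    ring_nf
  rw [e1, e2, hFt]
end
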